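/- For n ≥ 3, if a system C = (1, c₂, ..., cₙ) is canonical, then the subsystem (1, c₂, c₃) is canonical. -/

import Mathlib

open Finset

/-- `x` is a representation of value `v` in the coin system `c 1, …, c n`. -/
def IsRepr (n : ℕ) (c : ℕ → ℕ) (v : ℕ) (x : ℕ → ℕ) : Prop :=
  ∑ i ∈ Finset.Icc 1 n, c i * x i = v

/-- Minimum number of coins over all representations of `v`. -/
noncomputable def opt (n : ℕ) (c : ℕ → ℕ) (v : ℕ) : ℕ :=
  sInf {k | ∃ x : ℕ → ℕ, IsRepr n c v x ∧ ∑ i ∈ Finset.Icc 1 n, x i = k}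

/-- Number of coins used by the greedy algorithm to pay `v`. -/
def grd (n : ℕ) (c : ℕ → ℕ) (v : ℕ) : ℕ :=
  if hv : v = 0 then 0
  else
    let m := ((Finset.Icc 1 n).filter (fun i => c i ≤ v)).sup c
    if hm : 0 < m then grd n c (v - m) + 1 else 0
termination_by v
decreasing_by omega

/-- The system is canonical: greedy is optimal for every positive value. -/
def Canonical (n : ℕ) (c : ℕ → ℕ) : Prop :=
  ∀ v, 0 < v → opt n c v = grd n c v

/-- `w` is a counterexample to the system. -/
def IsCex (n : ℕ) (c : ℕ → ℕ) (w : ℕ) : Prop :=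
  0 < w ∧ opt n c w < grd n c w

/-- `w` is the minimum counterexample to the system. -/
def MinCex (n : ℕ) (c : ℕ → ℕ) (w : ℕ) : Prop :=
  IsCex n c w ∧ ∀ u, IsCex n c u → w ≤ u

/-- A (currency) system: first coin is `1` and coins strictly increase. -/
def IsSystem (n : ℕ) (c : ℕ → ℕ) : Prop :=
  c 1 = 1 ∧ StrictMonoOn c (Set.Icc 1 n)

/-!
Write `q * c₂ = c₃ + r` with `r < c₂`. If `r < q`, the system `(1, c₂, c₃)` is canonical: an
optimal representation of `v ≥ c₃` either contains `c₃`, or contains `q` coins `c₂`, which can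
be traded for `c₃` and `r` ones at no extra cost, or is so small that `v - c₃` is paid with fewer
ones.

If `q ≤ r`, the whole system cannot be canonical. Let `p < m` be coins with `m - p < c₃`. If
no coin lay in `(m, m + c₃)`, greedy would pay each `m + t` with `t < c₃` by `m`, then `t / c₂`
coins `c₂` and `t % c₂` ones; comparing this with the cheap representations of `p + c₃`,
`p + c₂` and `p + q * c₂` gives a contradiction. So the gaps between consecutive coins stay below
`c₃` (when `c₃ ≡ 1 (mod c₂)`, the gap `c₃ - 1` must be excluded as well to keep the induction
going), and there would be coins above every bound.
-/

def IsCoin (n : ℕ) (c : ℕ → ℕ) (γ : ℕ) : Prop := ∃ i ∈ Icc 1 n, c i = γ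

def greedyCoin (n : ℕ) (c : ℕ → ℕ) (v : ℕ) : ℕ := ((Icc 1 n).filter (fun i => c i ≤ v)).sup c

def grd₂ (a t : ℕ) : ℕ := t / a + t % a

section Greedy

variable {n : ℕ} {c : ℕ → ℕ} {v γ : ℕ}

theorem greedyCoin_le (n : ℕ) (c : ℕ → ℕ) (v : ℕ) : greedyCoin n c v ≤ v :=
  Finset.sup_le fun _ hi => (mem_filter.mp hi).2

theorem IsCoin.le_greedyCoin (hγ : IsCoin n c γ) (hγv : γ ≤ v) : γ ≤ greedyCoin n c v := by
  obtain ⟨i, hi, rfl⟩ := hγ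
  exact le_sup (mem_filter.mpr ⟨hi, hγv⟩)

theorem isCoin_greedyCoin (h1 : IsCoin n c 1) (hv : 0 < v) : IsCoin n c (greedyCoin n c v) := by
  obtain ⟨i, hi, hci⟩ := h1
  have hne : ((Icc 1 n).filter (fun i => c i ≤ v)).Nonempty :=
    ⟨i, mem_filter.mpr ⟨hi, by omega⟩⟩
  obtain ⟨j, hj, hjv⟩ := exists_mem_eq_sup _ hne c
  exact ⟨j, (mem_filter.mp hj).1, hjv.symm⟩

theorem greedyCoin_eq (hγ : IsCoin n c γ) (hγv : γ ≤ v)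
    (hmax : ∀ δ, IsCoin n c δ → δ ≤ v → δ ≤ γ) : greedyCoin n c v = γ :=
  le_antisymm
    (Finset.sup_le fun i hi => hmax _ ⟨i, (mem_filter.mp hi).1, rfl⟩ (mem_filter.mp hi).2)
    (hγ.le_greedyCoin hγv)

theorem grd_zero : grd n c 0 = 0 := by
  rw [grd]; simp

theorem grd_eq_grd_sub_add_one (hv : 0 < greedyCoin n c v) :
    grd n c v = grd n c (v - greedyCoin n c v) + 1 := by
  have hv0 : v ≠ 0 := by have := greedyCoin_le n c v; omega
  rw [grd, dif_neg hv0]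
  exact dif_pos hv

end Greedy

section Opt

variable {n : ℕ} {c : ℕ → ℕ} {v p γ : ℕ}

theorem opt_le_of_isRepr {x : ℕ → ℕ} (hx : IsRepr n c v x) :
    opt n c v ≤ ∑ i ∈ Icc 1 n, x i :=
  Nat.sInf_le ⟨x, hx, rfl⟩

theorem exists_isRepr_mul (hγ : IsCoin n c γ) (k : ℕ) :
    ∃ x, IsRepr n c (k * γ) x ∧ ∑ i ∈ Icc 1 n, x i = k := by
  obtain ⟨i, hi, rfl⟩ := hγ
  refine ⟨fun j => if j = i then k else 0, ?_, ?_⟩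
  · simp [IsRepr, mul_comm, hi]
  · simp [hi]

theorem opt_mul_le (hγ : IsCoin n c γ) (k : ℕ) : opt n c (k * γ) ≤ k := by
  obtain ⟨x, hx, hsum⟩ := exists_isRepr_mul hγ k
  exact (opt_le_of_isRepr hx).trans hsum.le

theorem opt_le_one_of_isCoin (hγ : IsCoin n c γ) : opt n c γ ≤ 1 := by
  simpa using opt_mul_le hγ 1

theorem opt_le_self (h1 : IsCoin n c 1) (v : ℕ) : opt n c v ≤ v := by
  simpa using opt_mul_le h1 v

theorem exists_isRepr_opt (h1 : IsCoin n c 1) (v : ℕ) :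
    ∃ x, IsRepr n c v x ∧ ∑ i ∈ Icc 1 n, x i = opt n c v := by
  obtain ⟨x, hx, hsum⟩ := exists_isRepr_mul h1 v
  exact Nat.sInf_mem (s := {k | ∃ x, IsRepr n c v x ∧ ∑ i ∈ Icc 1 n, x i = k})
    ⟨v, x, by simpa using hx, hsum⟩

theorem opt_add_le (h1 : IsCoin n c 1) (u v : ℕ) : opt n c (u + v) ≤ opt n c u + opt n c v := by
  obtain ⟨x, hx, hxs⟩ := exists_isRepr_opt h1 u
  obtain ⟨y, hy, hys⟩ := exists_isRepr_opt h1 v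
  have hxy : IsRepr n c (u + v) (x + y) := by
    simp only [IsRepr, Pi.add_apply, mul_add, sum_add_distrib] at hx hy ⊢
    rw [hx, hy]
  simpa only [Pi.add_apply, sum_add_distrib, hxs, hys] using opt_le_of_isRepr hxy

theorem opt_add_mul_le (h1 : IsCoin n c 1) (hp : IsCoin n c p) (hγ : IsCoin n c γ) (k : ℕ) :
    opt n c (p + k * γ) ≤ k + 1 := by
  have := opt_add_le h1 p (k * γ)
  have := opt_le_one_of_isCoin hp
  have := opt_mul_le hγ k
  omega

theorem opt_le_grd (h1 : IsCoin n c 1) (v : ℕ) : opt n c v ≤ grd n c v := by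
  induction v using Nat.strong_induction_on with
  | _ v ih =>
    rcases Nat.eq_zero_or_pos v with rfl | hv
    · simpa [grd_zero] using opt_mul_le h1 0
    set g := greedyCoin n c v
    have hg : 1 ≤ g := h1.le_greedyCoin hv
    calc opt n c v = opt n c (v - g + g) := by rw [Nat.sub_add_cancel (greedyCoin_le n c v)]
      _ ≤ opt n c (v - g) + opt n c g := opt_add_le h1 _ _
      _ ≤ grd n c (v - g) + 1 :=
        add_le_add (ih _ (by omega)) (opt_le_one_of_isCoin (isCoin_greedyCoin h1 hv))
      _ = grd n c v := (grd_eq_grd_sub_add_one hg).symm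

theorem canonical_of_grd_le_opt (h1 : IsCoin n c 1) (h : ∀ v, grd n c v ≤ opt n c v) :
    Canonical n c :=
  fun v _ => le_antisymm (opt_le_grd h1 v) (h v)

end Opt

section TwoCoins

variable {a t : ℕ}

theorem grd₂_of_lt (ht : t < a) : grd₂ a t = t := by
  simp [grd₂, Nat.div_eq_of_lt ht, Nat.mod_eq_of_lt ht]

theorem grd₂_add (ha : 0 < a) (t : ℕ) : grd₂ a (a + t) = grd₂ a t + 1 := by
  simp only [grd₂, Nat.add_div_left _ ha, Nat.add_mod_left]
  omega

theorem grd₂_le (ha : 0 < a) (x y : ℕ) : grd₂ a (x + a * y) ≤ x + y := by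
  simp only [grd₂, Nat.add_mul_div_left _ _ ha, Nat.add_mul_mod_self_left]
  have := Nat.div_add_mod x a
  have : x / a ≤ a * (x / a) := Nat.le_mul_of_pos_left _ ha
  omega

theorem two_le_grd₂ (h0 : t ≠ 0) (h1 : t ≠ 1) (ha : t ≠ a) : 2 ≤ grd₂ a t := by
  by_contra hlt
  simp only [grd₂, not_le] at hlt
  have hdiv := Nat.div_add_mod t a
  generalize t / a = k, t % a = s at hlt hdiv
  obtain rfl | rfl : k = 0 ∨ k = 1 := by omega
  all_goals simp only [mul_zero, mul_one] at hdiv; omega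

end TwoCoins

section System

variable {n : ℕ} {c : ℕ → ℕ} {γ : ℕ}

theorem isCoin_c {i : ℕ} (hi : 1 ≤ i) (hin : i ≤ n) : IsCoin n c (c i) :=
  ⟨i, mem_Icc.mpr ⟨hi, hin⟩, rfl⟩

theorem isCoin_one (h1 : c 1 = 1) (hn : 1 ≤ n) : IsCoin n c 1 :=
  ⟨1, mem_Icc.mpr ⟨le_rfl, hn⟩, h1⟩

namespace IsSystem

variable (hsys : IsSystem n c)
include hsys

theorem lt {i j : ℕ} (hi : 1 ≤ i) (hij : i < j) (hj : j ≤ n) : c i < c j :=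
  hsys.2 ⟨hi, by omega⟩ ⟨by omega, hj⟩ hij

theorem le {i j : ℕ} (hi : 1 ≤ i) (hij : i ≤ j) (hj : j ≤ n) : c i ≤ c j :=
  hsys.2.monotoneOn ⟨hi, by omega⟩ ⟨by omega, hj⟩ hij

theorem one_lt_c_two (hn : 2 ≤ n) : 1 < c 2 :=
  hsys.1 ▸ hsys.lt le_rfl one_lt_two hn

theorem c_two_lt_c_three (hn : 3 ≤ n) : c 2 < c 3 :=
  hsys.lt one_le_two (by norm_num) hn

theorem of_le {m : ℕ} (hmn : m ≤ n) : IsSystem m c :=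
  ⟨hsys.1, hsys.2.mono (Set.Icc_subset_Icc_right hmn)⟩

theorem le_top (hγ : IsCoin n c γ) : γ ≤ c n := by
  obtain ⟨i, hi, rfl⟩ := hγ
  exact hsys.le (mem_Icc.mp hi).1 (mem_Icc.mp hi).2 le_rfl

theorem pos_of_isCoin (hγ : IsCoin n c γ) : 0 < γ := by
  obtain ⟨i, hi, rfl⟩ := hγ
  have := hsys.le le_rfl (mem_Icc.mp hi).1 (mem_Icc.mp hi).2
  have := hsys.1
  omega

theorem isCoin_cases (hγ : IsCoin n c γ) : γ = 1 ∨ γ = c 2 ∨ c 3 ≤ γ := by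
  obtain ⟨i, hi, rfl⟩ := hγ
  obtain ⟨hi1, hin⟩ := mem_Icc.mp hi
  obtain rfl | rfl | h3 : i = 1 ∨ i = 2 ∨ 3 ≤ i := by omega
  · exact Or.inl hsys.1
  · exact Or.inr (Or.inl rfl)
  · exact Or.inr (Or.inr (hsys.le (by omega) h3 hin))

theorem grd_eq_grd₂ (hn : 3 ≤ n) {t : ℕ} (ht : t < c 3) : grd n c t = grd₂ (c 2) t := by
  have h12 := hsys.one_lt_c_two (by omega)
  have h23 := hsys.c_two_lt_c_three hn
  induction t using Nat.strong_induction_on with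
  | _ t ih =>
    rcases Nat.eq_zero_or_pos t with rfl | ht0
    · simp [grd_zero, grd₂]
    rcases Nat.lt_or_ge t (c 2) with hta | hta
    · have hg : greedyCoin n c t = 1 :=
        greedyCoin_eq (isCoin_one hsys.1 (by omega)) ht0 fun δ hδ hδt => by
          rcases hsys.isCoin_cases hδ with h | h | h <;> omega
      rw [grd_eq_grd_sub_add_one (by omega), hg, ih _ (by omega) (by omega), grd₂_of_lt hta,
        grd₂_of_lt (by omega)]
      omega
    · have hg : greedyCoin n c t = c 2 :=
        greedyCoin_eq (isCoin_c one_le_two (by omega)) hta fun δ hδ hδt => by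
          rcases hsys.isCoin_cases hδ with h | h | h <;> omega
      obtain ⟨s, rfl⟩ := Nat.exists_eq_add_of_le hta
      rw [grd_eq_grd_sub_add_one (by omega), hg, Nat.add_sub_cancel_left,
        ih _ (by omega) (by omega), grd₂_add (by omega)]

theorem grd_add_eq (hn : 3 ≤ n) {m t : ℕ} (hm : IsCoin n c m) (ht : t < c 3)
    (hgap : ∀ γ, IsCoin n c γ → m < γ → m + t < γ) : grd n c (m + t) = grd₂ (c 2) t + 1 := by
  have hm0 := hsys.pos_of_isCoin hm
  have hg : greedyCoin n c (m + t) = m :=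
    greedyCoin_eq hm (by omega) fun δ hδ hδv => by
      by_contra h
      have := hgap δ hδ (by omega)
      omega
  rw [grd_eq_grd_sub_add_one (by omega), hg, Nat.add_sub_cancel_left, hsys.grd_eq_grd₂ hn ht]

end IsSystem

end System

theorem exists_mul_eq_add_lt {a : ℕ} (ha : 0 < a) (b : ℕ) : ∃ q r, q * a = b + r ∧ r < a := by
  have hle := Nat.div_mul_le_self (b + a - 1) a
  have hlt := Nat.lt_div_mul_add (a := b + a - 1) ha
  exact ⟨(b + a - 1) / a, (b + a - 1) / a * a - b, by omega, by omega⟩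

theorem two_le_of_mul_eq_add {a b q r : ℕ} (hab : a < b) (h : q * a = b + r) : 2 ≤ q := by
  by_contra hq
  have : q * a ≤ 1 * a := Nat.mul_le_mul_right _ (by omega)
  omega

section ThreeCoins

variable {c : ℕ → ℕ} {q r v : ℕ}

theorem sum_Icc_one_three (f : ℕ → ℕ) : ∑ i ∈ Icc 1 3, f i = f 1 + f 2 + f 3 := by
  rw [show Icc 1 3 = {1, 2, 3} by rfl]
  simp [add_assoc]

theorem opt_three_le (h1 : c 1 = 1) (x y z : ℕ) :
    opt 3 c (x + c 2 * y + c 3 * z) ≤ x + y + z := by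
  have hx : IsRepr 3 c (x + c 2 * y + c 3 * z)
      (fun i => if i = 1 then x else if i = 2 then y else z) := by
    simp [IsRepr, sum_Icc_one_three, h1]
  simpa [sum_Icc_one_three] using opt_le_of_isRepr hx

theorem exists_opt_three (h1 : c 1 = 1) (v : ℕ) :
    ∃ x y z, x + c 2 * y + c 3 * z = v ∧ x + y + z = opt 3 c v := by
  obtain ⟨w, hw, hsum⟩ := exists_isRepr_opt (isCoin_one (n := 3) h1 (by norm_num)) v
  simp only [IsRepr, sum_Icc_one_three, h1, one_mul] at hw hsum
  exact ⟨w 1, w 2, w 3, hw, hsum⟩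

theorem opt_sub_c_three_lt (hsys : IsSystem 3 c) (hQ : q * c 2 = c 3 + r) (hr : r < c 2)
    (hrq : r < q) (hv : c 3 ≤ v) : opt 3 c (v - c 3) < opt 3 c v := by
  obtain ⟨x, y, z, hxyz, hopt⟩ := exists_opt_three hsys.1 v
  rw [← hopt]
  rcases Nat.eq_zero_or_pos z with rfl | hz
  · rcases Nat.lt_or_ge y q with hyq | hyq
    · have hmul : c 2 * (y + 1) ≤ q * c 2 := by rw [mul_comm q]; exact Nat.mul_le_mul_left _ hyq
      rw [mul_add, mul_one] at hmul
      have := opt_le_self (isCoin_one (n := 3) hsys.1 (by norm_num)) (v - c 3)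
      omega
    · obtain ⟨y, rfl⟩ := Nat.exists_eq_add_of_le hyq
      have := opt_three_le hsys.1 (x + r) y 0
      rw [show x + r + c 2 * y + c 3 * 0 = v - c 3 by
        rw [mul_add, mul_comm (c 2) q, hQ] at hxyz; omega] at this
      omega
  · obtain ⟨z, rfl⟩ := Nat.exists_eq_add_of_le hz
    have := opt_three_le hsys.1 x y z
    rw [show x + c 2 * y + c 3 * z = v - c 3 by rw [mul_add] at hxyz; omega] at this
    omega

theorem canonical_three_of_lt (hsys : IsSystem 3 c) (hQ : q * c 2 = c 3 + r) (hr : r < c 2)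
    (hrq : r < q) : Canonical 3 c := by
  have h23 := hsys.c_two_lt_c_three le_rfl
  refine canonical_of_grd_le_opt (isCoin_one hsys.1 (by norm_num)) fun v => ?_
  induction v using Nat.strong_induction_on with
  | _ v ih =>
    rcases Nat.lt_or_ge v (c 3) with hv | hv
    · obtain ⟨x, y, z, hxyz, hopt⟩ := exists_opt_three hsys.1 v
      have hz : z = 0 := by
        by_contra hz
        have : c 3 ≤ c 3 * z := Nat.le_mul_of_pos_right _ (by omega)
        omega
      subst hz
      rw [hsys.grd_eq_grd₂ le_rfl hv, ← hopt, ← hxyz, mul_zero, add_zero]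
      exact (grd₂_le (by omega) x y).trans (by omega)
    · have hg : greedyCoin 3 c v = c 3 :=
        greedyCoin_eq (isCoin_c (by norm_num) le_rfl) hv fun δ hδ _ => hsys.le_top hδ
      rw [grd_eq_grd_sub_add_one (by omega), hg]
      exact (Nat.add_le_add_right (ih _ (by omega)) 1).trans (opt_sub_c_three_lt hsys hQ hr hrq hv)

end ThreeCoins

/-- `r + 1 = c 2` is the case `c 3 ≡ 1 (mod c 2)`. -/
def IsGoodGap (c : ℕ → ℕ) (r d : ℕ) : Prop := 0 < d ∧ d < c 3 ∧ (r + 1 = c 2 → d + 1 < c 3)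

section NotCanonical

variable {n : ℕ} {c : ℕ → ℕ} {p m q r L : ℕ}

theorem Canonical.opt_add_eq (hcan : Canonical n c) (hsys : IsSystem n c) (hn : 3 ≤ n)
    (hm : IsCoin n c m) (hgap : ∀ γ, IsCoin n c γ → m < γ → m + L ≤ γ) (hL : L ≤ c 3)
    {t : ℕ} (ht : t < L) : opt n c (m + t) = grd₂ (c 2) t + 1 := by
  have hm0 := hsys.pos_of_isCoin hm
  rw [hcan _ (by omega), hsys.grd_add_eq hn hm (by omega) fun γ hγ hmγ => by
    have := hgap γ hγ hmγ; omega]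

theorem gap_cases (hsys : IsSystem n c) (hn : 3 ≤ n) (hQ : q * c 2 = c 3 + r) (hr : r < c 2)
    (hqr : q ≤ r) (hp : IsCoin n c p)
    (hopt_low : ∀ t < L, grd₂ (c 2) t + 1 ≤ opt n c (m + t)) (hL : c 3 ≤ L + 1)
    (hpm : m < p + c 3) (hmL : p + c 3 < m + L) :
    m + 1 = p + c 3 ∨ (q = 2 ∧ m + c 2 = p + c 3) := by
  have h1 := isCoin_one hsys.1 (by omega : 1 ≤ n)
  have hc2 : IsCoin n c (c 2) := isCoin_c one_le_two (by omega)
  have hc3 : IsCoin n c (c 3) := isCoin_c (by norm_num) hn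
  have h12 := hsys.one_lt_c_two (by omega)
  have h23 := hsys.c_two_lt_c_three hn
  have hq := two_le_of_mul_eq_add h23 hQ
  have hpc3 := hopt_low (p + c 3 - m) (by omega)
  rw [show m + (p + c 3 - m) = p + 1 * c 3 by omega] at hpc3
  have := opt_add_mul_le h1 hp hc3 1
  have ht : p + c 3 - m = 1 ∨ p + c 3 - m = c 2 := by
    by_contra! ht
    have := two_le_grd₂ (by omega) ht.1 ht.2
    omega
  refine ht.imp (by omega) fun ht => ⟨?_, by omega⟩
  by_contra hq2
  have : 3 * c 2 ≤ q * c 2 := Nat.mul_le_mul_right _ (by omega)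
  have hpq := hopt_low (c 2 + r) (by omega)
  rw [show m + (c 2 + r) = p + q * c 2 by omega, grd₂_add (by omega), grd₂_of_lt hr] at hpq
  have := opt_add_mul_le h1 hp hc2 q
  omega

variable (hcan : Canonical n c) (hsys : IsSystem n c) (hn : 3 ≤ n) (hQ : q * c 2 = c 3 + r)
  (hr : r < c 2) (hqr : q ≤ r) (hp : IsCoin n c p) (hm : IsCoin n c m)
  (hgap : IsGoodGap c r (m - p))
include hcan hsys hn hQ hr hqr hp hm hgap

theorem exists_isCoin_lt_add_c_three : ∃ γ, IsCoin n c γ ∧ m < γ ∧ γ < m + c 3 := by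
  have h23 := hsys.c_two_lt_c_three hn
  have h1 := isCoin_one hsys.1 (by omega : 1 ≤ n)
  have hc2 : IsCoin n c (c 2) := isCoin_c one_le_two (by omega)
  by_contra! hno
  have hopt_low : ∀ t < c 3, grd₂ (c 2) t + 1 ≤ opt n c (m + t) := fun t ht =>
    (hcan.opt_add_eq hsys hn hm hno le_rfl ht).ge
  obtain ⟨hd0, hd, hgap_corner⟩ := hgap
  rcases gap_cases hsys hn hQ hr hqr hp hopt_low (by omega) (by omega) (by omega) with
    hd' | ⟨rfl, hd'⟩
  · have hrc : r + 1 < c 2 := by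
      by_contra
      have := hgap_corner (by omega)
      omega
    have hpq := hopt_low (r + 1) (by omega)
    rw [show m + (r + 1) = p + q * c 2 by omega, grd₂_of_lt hrc] at hpq
    have := opt_add_mul_le h1 hp hc2 q
    omega
  · have hpa := hopt_low r (by omega)
    rw [show m + r = p + 1 * c 2 by omega, grd₂_of_lt hr] at hpa
    have := opt_add_mul_le h1 hp hc2 1
    omega

theorem exists_isCoin_add_one_lt_add_c_three (hcorner : r + 1 = c 2) :
    ∃ γ, IsCoin n c γ ∧ m < γ ∧ γ + 1 < m + c 3 := by
  have h1 := isCoin_one hsys.1 (by omega : 1 ≤ n)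
  have hc2 : IsCoin n c (c 2) := isCoin_c one_le_two (by omega)
  have h23 := hsys.c_two_lt_c_three hn
  have hq := two_le_of_mul_eq_add h23 hQ
  by_contra! hno
  have hopt_low : ∀ t < c 3 - 1, grd₂ (c 2) t + 1 ≤ opt n c (m + t) := fun t ht =>
    (hcan.opt_add_eq hsys hn hm (fun γ hγ hmγ => by have := hno γ hγ hmγ; omega)
      (by omega) ht).ge
  obtain ⟨hd0, hd, hgap_corner⟩ := hgap
  have hpa : p + c 2 ≤ m + 1 := by
    by_contra
    have hpa := hopt_low (p + c 2 - m) (by omega)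
    rw [show m + (p + c 2 - m) = p + 1 * c 2 by omega,
      grd₂_of_lt (show p + c 2 - m < c 2 by omega)] at hpa
    have := opt_add_mul_le h1 hp hc2 1
    omega
  rcases gap_cases hsys hn hQ hr hqr hp hopt_low (by omega) (by omega) (by omega) with
    hd' | ⟨rfl, hd'⟩
  · have := hgap_corner hcorner
    omega
  · omega

theorem exists_isGoodGap_next : ∃ γ, IsCoin n c γ ∧ m < γ ∧ IsGoodGap c r (γ - m) := by
  classical
  obtain ⟨δ, hδ, hmδ, hδm⟩ := exists_isCoin_lt_add_c_three hcan hsys hn hQ hr hqr hp hm hgap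
  have hex : ∃ γ, IsCoin n c γ ∧ m < γ := ⟨δ, hδ, hmδ⟩
  obtain ⟨hγ, hmγ⟩ := Nat.find_spec hex
  have hmin : ∀ δ, IsCoin n c δ → m < δ → Nat.find hex ≤ δ :=
    fun δ hδ hmδ => Nat.find_min' hex ⟨hδ, hmδ⟩
  refine ⟨Nat.find hex, hγ, hmγ, by omega, by have := hmin δ hδ hmδ; omega, fun hcorner => ?_⟩
  obtain ⟨δ', hδ', hmδ', hδ'm⟩ :=
    exists_isCoin_add_one_lt_add_c_three hcan hsys hn hQ hr hqr hp hm hgap hcorner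
  have := hmin δ' hδ' hmδ'
  omega

end NotCanonical

theorem not_canonical_of_le {n : ℕ} {c : ℕ → ℕ} {q r : ℕ} (hsys : IsSystem n c) (hn : 3 ≤ n)
    (hQ : q * c 2 = c 3 + r) (hr : r < c 2) (hqr : q ≤ r) : ¬ Canonical n c := by
  intro hcan
  have h12 := hsys.one_lt_c_two (by omega)
  have h23 := hsys.c_two_lt_c_three hn
  have hunbounded : ∀ k, ∃ p m, IsCoin n c p ∧ IsCoin n c m ∧ IsGoodGap c r (m - p) ∧ k ≤ m := by
    intro k
    induction k with
    | zero =>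
      exact ⟨c 2, c 3, isCoin_c one_le_two (by omega), isCoin_c (by norm_num) hn,
        ⟨by omega, by omega, fun _ => by omega⟩, Nat.zero_le _⟩
    | succ k ih =>
      obtain ⟨p, m, hp, hm, hgap, hkm⟩ := ih
      obtain ⟨γ, hγ, hmγ, hgap'⟩ := exists_isGoodGap_next hcan hsys hn hQ hr hqr hp hm hgap
      exact ⟨m, γ, hm, hγ, hgap', by omega⟩
  obtain ⟨_, m, _, hm, _, hm'⟩ := hunbounded (c n + 1)
  have := hsys.le_top hm
  omega

/-- The three-coin prefix of a canonical system is canonical. -/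
theorem canonical_prefix_three (n : ℕ) (c : ℕ → ℕ) (hn : 3 ≤ n)
    (hsys : IsSystem n c) (h : Canonical n c) :
    Canonical 3 c := by
  obtain ⟨q, r, hQ, hr⟩ := exists_mul_eq_add_lt (hsys.one_lt_c_two (by omega)).le (c 3)
  by_cases hrq : r < q
  · exact canonical_three_of_lt (hsys.of_le hn) hQ hr hrq
  · exact absurd h (not_canonical_of_le hsys hn hQ hr (not_lt.mp hrq))
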